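/- Let Γ be a finite group acting on a lattice X with E = X ⊗ ℝ. An element γx ∈ Γ ⋉ X (γ ∈ Γ, x ∈ X) has an isolated fixed point in E if and only if γ is elliptic in Γ (i.e. E^{ρ(γ)} = 0). Moreover, if γ is elliptic, then the lattice (id_E − ρ(γ))X has finite index in X, and consequently Γ ⋉ X has only finitely many elliptic conjugacy classes. -/

import Mathlib

/-!
The fixed points of `v ↦ x + ρ(γ) v` on `E` form a translate of `E^{ρ(γ)}`, so a fixed point is
isolated exactly when `E^{ρ(γ)} = 0`, and then `id − ρ(γ)` is invertible on `E`, so a fixed point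
exists. Over `ℤ` the matrix `M` of `id − ρ(γ)` then has `det M ≠ 0`, and `M · adj M = det M` puts
`(det M) X` inside `(id − ρ(γ)) X`. Conjugating `xγ` by a translation `z` replaces `x` by
`x + (id − ρ(γ)) z`, so each of the finitely many elliptic `γ` contributes finitely many
conjugacy classes.
-/

noncomputable section

variable {d : ℕ} (Γ : Type) [Group Γ] [Fintype Γ]

abbrev XZ (d : ℕ) := Fin d → ℤ
abbrev ER (d : ℕ) := Fin d → ℝ

/-- The inclusion `X → E = X ⊗ ℝ`. -/
def ιR (x : XZ d) : ER d := fun i => (x i : ℝ)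

/-- The real extension of an additive automorphism of the lattice `X`. -/
def realExt (f : XZ d ≃+ XZ d) : ER d → ER d := fun v i =>
  ∑ j, ((f (Pi.single j 1)) i : ℝ) * v j

variable (ρ : Γ →* Multiplicative (AddAut (XZ d)))

/-- `γ` is elliptic: `E^{ρ(γ)} = 0`. -/
def IsElliptic (γ : Γ) : Prop := ∀ v : ER d, realExt (ρ γ) v = v → v = 0

def phiAct : Γ →* MulAut (Multiplicative (XZ d)) where
  toFun γ := AddEquiv.toMultiplicative (ρ γ)
  map_one' := by ext x; rw [map_one]; rfl
  map_mul' a b := by ext x; rw [map_mul]; rfl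

/-- The group `W = Γ ⋉ X` (written with `X` first, as `X ⋊ Γ`). -/
abbrev Wgrp := Multiplicative (XZ d) ⋊[phiAct Γ ρ] Γ

/-- The affine action of `w = γx ∈ Γ ⋉ X` on `E`: `v ↦ x + ρ(γ)v`. -/
def affAct (w : Wgrp Γ ρ) (v : ER d) : ER d :=
  ιR (Multiplicative.toAdd w.left) + realExt (ρ w.right) v

def HasIsolatedFixedPoint (w : Wgrp Γ ρ) : Prop :=
  ∃ e : ER d, affAct Γ ρ w e = e ∧
    ∃ U ∈ nhds e, ∀ y ∈ U, affAct Γ ρ w y = y → y = e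

open Filter Topology

theorem LinearMap.eq_zero_of_isolated_fixedPoint {𝕜 E : Type*} [NontriviallyNormedField 𝕜]
    [AddCommGroup E] [Module 𝕜 E] [TopologicalSpace E] [ContinuousAdd E] [ContinuousSMul 𝕜 E]
    (L : E →ₗ[𝕜] E) {b e : E} (he : b + L e = e) {U : Set E} (hU : U ∈ 𝓝 e)
    (hiso : ∀ y ∈ U, b + L y = y → y = e) {v : E} (hv : L v = v) : v = 0 := by
  have hline : Tendsto (fun t : 𝕜 => e + t • v) (𝓝[≠] 0) (𝓝 e) := by
    have hcont : Continuous fun t : 𝕜 => e + t • v := by fun_prop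
    simpa using (hcont.tendsto 0).mono_left nhdsWithin_le_nhds
  obtain ⟨t, htU, ht⟩ := ((hline.eventually_mem hU).and self_mem_nhdsWithin).exists
  have hfix : b + L (e + t • v) = e + t • v := by rw [map_add, map_smul, hv, ← add_assoc, he]
  have htv : t • v = 0 := by simpa using hiso _ htU hfix
  exact (smul_eq_zero.mp htv).resolve_left ht

theorem LinearMap.existsUnique_fixedPoint {K E : Type*} [Field K] [AddCommGroup E] [Module K E]
    [FiniteDimensional K E] (L : E →ₗ[K] E) (hL : ∀ v, L v = v → v = 0) (b : E) :
    ∃! e : E, b + L e = e := by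
  have hinj : Function.Injective (LinearMap.id - L : E →ₗ[K] E) := by
    rw [← LinearMap.ker_eq_bot, LinearMap.ker_eq_bot']
    exact fun v hv => hL v (sub_eq_zero.mp hv).symm
  obtain ⟨e, he⟩ := LinearMap.injective_iff_surjective.mp hinj b
  have fixed_iff : ∀ y, b + L y = y ↔ (LinearMap.id - L : E →ₗ[K] E) y = b := fun y => by
    rw [LinearMap.sub_apply, LinearMap.id_apply, sub_eq_iff_eq_add]
    exact eq_comm
  exact ⟨e, (fixed_iff e).mpr he, fun y hy => hinj (((fixed_iff y).mp hy).trans he.symm)⟩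

theorem LinearMap.exists_isolated_fixedPoint_iff {𝕜 E : Type*} [NontriviallyNormedField 𝕜]
    [AddCommGroup E] [Module 𝕜 E] [TopologicalSpace E] [ContinuousAdd E] [ContinuousSMul 𝕜 E]
    [FiniteDimensional 𝕜 E] (L : E →ₗ[𝕜] E) (b : E) :
    (∃ e, b + L e = e ∧ ∃ U ∈ 𝓝 e, ∀ y ∈ U, b + L y = y → y = e) ↔ ∀ v, L v = v → v = 0 := by
  constructor
  · rintro ⟨e, he, U, hU, hiso⟩ v hv
    exact L.eq_zero_of_isolated_fixedPoint he hU hiso hv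
  · intro hL
    obtain ⟨e, he, huniq⟩ := L.existsUnique_fixedPoint hL b
    exact ⟨e, he, Set.univ, univ_mem, fun y _ hy => huniq y hy⟩

theorem AddMonoidHom.index_range_ne_zero_of_det_ne_zero {ι : Type*} [Fintype ι] [DecidableEq ι]
    (g : (ι → ℤ) →+ (ι → ℤ)) (hg : LinearMap.det g.toIntLinearMap ≠ 0) : g.range.index ≠ 0 := by
  set M := LinearMap.toMatrix' g.toIntLinearMap
  have hM : M.det ≠ 0 := by rwa [LinearMap.det_toMatrix']
  have hg_mulVec : ∀ x, g x = M.mulVec x := fun x =>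
    (LinearMap.toMatrix'_mulVec g.toIntLinearMap x).symm
  -- `M * adj M = det M • 1`, so the range of `g` contains `|det M| • (ι → ℤ)`.
  have hle : (nsmulAddMonoidHom (α := ι → ℤ) M.det.natAbs).range ≤ g.range := by
    rintro _ ⟨x, rfl⟩
    refine ⟨M.adjugate.mulVec (M.det.sign • x), ?_⟩
    rw [hg_mulVec, Matrix.mulVec_mulVec, Matrix.mul_adjugate, Matrix.smul_mulVec,
      Matrix.one_mulVec, smul_smul, mul_comm, Int.sign_mul_self, natCast_zsmul]
    rfl
  refine ne_zero_of_dvd_ne_zero ?_ (AddSubgroup.index_dvd_of_le hle)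
  rw [AddSubgroup.index_range_nsmul]
  exact pow_ne_zero _ (Int.natAbs_ne_zero.mpr hM)

-- Definitionally `realExt f`, so `affAct w` is literally an instance of `v ↦ b + L v`.
def realExtLinear (f : XZ d ≃+ XZ d) : ER d →ₗ[ℝ] ER d :=
  ((LinearMap.toMatrix' f.toAddMonoidHom.toIntLinearMap).map (Int.cast : ℤ → ℝ)).mulVecLin

theorem det_id_sub_ne_zero (f : XZ d ≃+ XZ d) (hf : ∀ v, realExt f v = v → v = 0) :
    LinearMap.det (AddMonoidHom.id (XZ d) - f.toAddMonoidHom).toIntLinearMap ≠ 0 := by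
  set A := LinearMap.toMatrix' (AddMonoidHom.id (XZ d) - f.toAddMonoidHom).toIntLinearMap
  have hA : A.map (Int.cast : ℤ → ℝ) =
      1 - (LinearMap.toMatrix' f.toAddMonoidHom.toIntLinearMap).map Int.cast := by
    ext i j
    simp [A, LinearMap.toMatrix'_apply, Matrix.one_apply, Pi.single_apply]
  rw [← LinearMap.det_toMatrix']
  intro hdet
  obtain ⟨v, hv0, hv⟩ := Matrix.exists_mulVec_eq_zero_iff.mpr
    (show (A.map (Int.cast : ℤ → ℝ)).det = 0 by
      rw [show A.map (Int.cast : ℤ → ℝ) = (Int.castRingHom ℝ).mapMatrix A from rfl,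
        ← RingHom.map_det, hdet, map_zero])
  rw [hA, Matrix.sub_mulVec, Matrix.one_mulVec, sub_eq_zero] at hv
  exact hv0 (hf v hv.symm)

theorem SemidirectProduct.inl_mul_mul_inv_inl {N G : Type*} [Group N] [Group G]
    {φ : G →* MulAut N} (n : N) (x : N ⋊[φ] G) :
    inl n * x * (inl n)⁻¹ = ⟨n * x.left * φ x.right n⁻¹, x.right⟩ := by
  ext <;> simp

section Crystallographic

variable {G : Type} [Group G] (σ : G →* Multiplicative (AddAut (XZ d)))

theorem hasIsolatedFixedPoint_iff_isElliptic (w : Wgrp G σ) :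
    HasIsolatedFixedPoint G σ w ↔ IsElliptic G σ w.right :=
  (realExtLinear (σ w.right)).exists_isolated_fixedPoint_iff _

theorem index_range_id_sub_ne_zero {γ : G} (hγ : IsElliptic G σ γ) :
    (AddMonoidHom.range
      ((AddMonoidHom.id (XZ d)) - (Multiplicative.toAdd (σ γ)).toAddMonoidHom)).index ≠ 0 :=
  AddMonoidHom.index_range_ne_zero_of_det_ne_zero _ (det_id_sub_ne_zero _ hγ)

theorem conjClassesMk_add_id_sub (γ : G) (x z : XZ d) :
    ConjClasses.mk (⟨Multiplicative.ofAdd (x + (z - Multiplicative.toAdd (σ γ) z)), γ⟩ : Wgrp G σ)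
      = ConjClasses.mk ⟨Multiplicative.ofAdd x, γ⟩ := by
  refine ConjClasses.mk_eq_mk_iff_isConj.mpr
    (isConj_iff.mpr ⟨SemidirectProduct.inl (.ofAdd z), ?_⟩).symm
  rw [SemidirectProduct.inl_mul_mul_inv_inl]
  congr 1
  change Multiplicative.ofAdd (z + x + Multiplicative.toAdd (σ γ) (-z)) = _
  rw [map_neg]
  congr 1
  abel

theorem finite_range_conjClassesMk {γ : G}
    (hγ : (AddMonoidHom.range
      ((AddMonoidHom.id (XZ d)) - (Multiplicative.toAdd (σ γ)).toAddMonoidHom)).index ≠ 0) :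
    (Set.range fun x : XZ d => ConjClasses.mk (⟨Multiplicative.ofAdd x, γ⟩ : Wgrp G σ)).Finite := by
  set H := AddMonoidHom.range
    ((AddMonoidHom.id (XZ d)) - (Multiplicative.toAdd (σ γ)).toAddMonoidHom)
  have : H.FiniteIndex := ⟨hγ⟩
  let F : XZ d ⧸ H → ConjClasses (Wgrp G σ) :=
    Quotient.lift (fun x => ConjClasses.mk ⟨Multiplicative.ofAdd x, γ⟩) fun x y hxy => by
      obtain ⟨z, hz⟩ := QuotientAddGroup.leftRel_apply.mp hxy
      rw [← conjClassesMk_add_id_sub σ γ x z]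
      congr
      rw [← eq_neg_add_iff_add_eq.mp hz]
      rfl
  exact (Set.finite_range F).subset (Set.range_subset_iff.mpr fun x => ⟨x, rfl⟩)

end Crystallographic

/-- An element `γx ∈ Γ ⋉ X` has an isolated fixed point in
`E` iff `γ` is elliptic; if `γ` is elliptic then the lattice `(id − ρ(γ))X`
has finite index in `X`; consequently `Γ ⋉ X` has only finitely many elliptic
conjugacy classes. -/
theorem isolated_fixed_point_iff_elliptic_and_finiteness :
    (∀ w : Wgrp Γ ρ, HasIsolatedFixedPoint Γ ρ w ↔ IsElliptic Γ ρ w.right) ∧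
    (∀ γ : Γ, IsElliptic Γ ρ γ →
      (AddMonoidHom.range
        ((AddMonoidHom.id (XZ d)) - (Multiplicative.toAdd (ρ γ)).toAddMonoidHom)).index ≠ 0) ∧
    Set.Finite {c : ConjClasses (Wgrp Γ ρ) |
      ∃ w : Wgrp Γ ρ, ConjClasses.mk w = c ∧ HasIsolatedFixedPoint Γ ρ w} := by
  refine ⟨hasIsolatedFixedPoint_iff_isElliptic ρ, fun γ => index_range_id_sub_ne_zero ρ, ?_⟩
  refine ((Set.toFinite {γ | IsElliptic Γ ρ γ}).biUnion fun γ hγ =>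
    finite_range_conjClassesMk ρ (index_range_id_sub_ne_zero ρ hγ)).subset ?_
  rintro _ ⟨w, rfl, hw⟩
  exact Set.mem_biUnion ((hasIsolatedFixedPoint_iff_isElliptic ρ w).mp hw)
    ⟨Multiplicative.toAdd w.left, rfl⟩

end
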